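/- arXiv:1105.0494 — 3 statements merged into one kernel-verified Lean document; each statement's English description precedes it below -/
import Mathlib

section
/- The function θ ↦ log A(θ) is strictly increasing on (-∞, 0) and on (0, ∞), where A(θ) = ∫_α^β (x^θ + (1-x)^θ)^(-1/θ) dx with 0 < α < β < 1. -/
open MeasureTheory

/-- Strict superadditivity of `rpow` with exponent `> 1`. -/
lemma aux_superadd {a b r : ℝ} (ha : 0 < a) (hb : 0 < b) (hr : 1 < r) :
    a ^ r + b ^ r < (a + b) ^ r := by
  have hab : 0 < a + b := by linarith
  have key : ∀ c : ℝ, 0 < c → c < a + b → c ^ r < c * (a + b) ^ (r - 1) := by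
    intro c hc hcab
    have h1 : c ^ (r - 1) < (a + b) ^ (r - 1) :=
      Real.rpow_lt_rpow hc.le hcab (by linarith)
    calc c ^ r = c ^ (1 + (r - 1)) := by ring_nf
      _ = c ^ (1:ℝ) * c ^ (r - 1) := Real.rpow_add hc 1 (r - 1)
      _ = c * c ^ (r - 1) := by rw [Real.rpow_one]
      _ < c * (a + b) ^ (r - 1) := mul_lt_mul_of_pos_left h1 hc
  have h1 := key a ha (by linarith)
  have h2 := key b hb (by linarith)
  have h3 : (a + b) ^ r = (a + b) * (a + b) ^ (r - 1) := by
    calc (a + b) ^ r = (a + b) ^ (1 + (r - 1)) := by ring_nf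
      _ = (a + b) ^ (1:ℝ) * (a + b) ^ (r - 1) := Real.rpow_add hab 1 (r - 1)
      _ = (a + b) * (a + b) ^ (r - 1) := by rw [Real.rpow_one]
  nlinarith [Real.rpow_pos_of_pos hab (r - 1)]

/-- The `p`-norm of a pair of positive reals is strictly decreasing in `p > 0`. -/
lemma aux_norm_strictAnti {t s p q : ℝ} (ht : 0 < t) (hs : 0 < s) (hp : 0 < p)
    (hpq : p < q) :
    (t ^ q + s ^ q) ^ (1 / q) < (t ^ p + s ^ p) ^ (1 / p) := by
  have hq : 0 < q := hp.trans hpq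
  set r := q / p with hr
  have hr1 : 1 < r := (one_lt_div hp).mpr hpq
  have h1 : (t ^ p) ^ r = t ^ q := by
    rw [← Real.rpow_mul ht.le]
    congr 1
    rw [hr]
    field_simp
  have h2 : (s ^ p) ^ r = s ^ q := by
    rw [← Real.rpow_mul hs.le]
    congr 1
    rw [hr]
    field_simp
  have hsum : 0 < t ^ p + s ^ p := by positivity
  have main : t ^ q + s ^ q < (t ^ p + s ^ p) ^ r := by
    have := aux_superadd (Real.rpow_pos_of_pos ht p) (Real.rpow_pos_of_pos hs p) hr1
    rwa [h1, h2] at this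
  have step := Real.rpow_lt_rpow (by positivity) main (by positivity : (0:ℝ) < 1 / q)
  calc (t ^ q + s ^ q) ^ (1 / q) < ((t ^ p + s ^ p) ^ r) ^ (1 / q) := step
    _ = (t ^ p + s ^ p) ^ (1 / p) := by
        rw [← Real.rpow_mul hsum.le]
        congr 1
        rw [hr]
        field_simp

/-- The integrand is strictly increasing in `θ` on each half line. -/
lemma aux_integrand_lt {t θ₁ θ₂ : ℝ} (ht : 0 < t) (ht1 : t < 1) (h : θ₁ < θ₂)
    (hsign : 0 < θ₁ ∨ θ₂ < 0) :
    (t ^ θ₁ + (1 - t) ^ θ₁) ^ (-(1 / θ₁)) < (t ^ θ₂ + (1 - t) ^ θ₂) ^ (-(1 / θ₂)) := by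
  set s := 1 - t with hs
  have hs0 : 0 < s := by simp only [hs]; linarith
  rcases hsign with hpos | hneg
  · -- positive case
    have key := aux_norm_strictAnti ht hs0 hpos h
    have h1 : 0 < (t ^ θ₂ + s ^ θ₂) ^ (1 / θ₂) := by positivity
    rw [Real.rpow_neg (by positivity), Real.rpow_neg (by positivity)]
    exact inv_strictAnti₀ h1 key
  · -- negative case
    have hθ₁ : θ₁ < 0 := h.trans hneg
    have hts : 0 < t * s := by positivity
    have identity : ∀ θ : ℝ, θ ≠ 0 →
        (t ^ θ + s ^ θ) ^ (-(1 / θ)) = (t * s)⁻¹ * (t ^ (-θ) + s ^ (-θ)) ^ (1 / (-θ)) := by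
      intro θ hθ
      have e1 : t ^ θ * t ^ (-θ) = 1 := by
        rw [← Real.rpow_add ht]; simp
      have e2 : s ^ θ * s ^ (-θ) = 1 := by
        rw [← Real.rpow_add hs0]; simp
      have hfact : t ^ θ + s ^ θ = (t * s) ^ θ * (t ^ (-θ) + s ^ (-θ)) := by
        rw [Real.mul_rpow ht.le hs0.le, mul_add]
        linear_combination (-s ^ θ) * e1 + (-t ^ θ) * e2
      rw [hfact, Real.mul_rpow (by positivity) (by positivity), ← Real.rpow_mul hts.le]
      have hexp : θ * -(1 / θ) = -1 := by field_simp
      rw [hexp, Real.rpow_neg_one, div_neg]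
    rw [identity θ₁ hθ₁.ne, identity θ₂ hneg.ne]
    have key := aux_norm_strictAnti ht hs0 (neg_pos.mpr hneg) (neg_lt_neg h)
    exact mul_lt_mul_of_pos_left key (by positivity)

lemma aux_cont {θ α β : ℝ} (hα : 0 < α) (hβ : β < 1) (hαβ : α < β) :
    ContinuousOn (fun x : ℝ => (x ^ θ + (1 - x) ^ θ) ^ (-(1 / θ))) (Set.uIcc α β) := by
  have hmem : ∀ x ∈ Set.uIcc α β, 0 < x ∧ x < 1 := by
    intro x hx
    rw [Set.uIcc_of_le hαβ.le] at hx
    exact ⟨hα.trans_le hx.1, lt_of_le_of_lt hx.2 hβ⟩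
  have h1 : ContinuousOn (fun x : ℝ => x ^ θ) (Set.uIcc α β) :=
    ContinuousOn.rpow_const continuousOn_id fun x hx => Or.inl (hmem x hx).1.ne'
  have h2 : ContinuousOn (fun x : ℝ => (1 - x) ^ θ) (Set.uIcc α β) :=
    ContinuousOn.rpow_const (continuousOn_const.sub continuousOn_id)
      fun x hx => Or.inl (sub_ne_zero.mpr (hmem x hx).2.ne')
  refine ContinuousOn.rpow_const (h1.add h2) fun x hx => Or.inl ?_
  have hx1 := (hmem x hx).1
  have hx2 := (hmem x hx).2
  have : 0 < x ^ θ + (1 - x) ^ θ := by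
    have := Real.rpow_pos_of_pos hx1 θ
    have := Real.rpow_pos_of_pos (by linarith : (0:ℝ) < 1 - x) θ
    linarith
  exact this.ne'

/-- For `0 < α < β < 1`, the function `θ ↦ log A(θ)`, where
`A(θ) = ∫_α^β (x^θ + (1-x)^θ)^{-1/θ} dx`, is strictly increasing on
`(-∞, 0)` and on `(0, ∞)`. -/
theorem stmt1 (α β : ℝ) (hα : 0 < α) (hαβ : α < β) (hβ : β < 1) :
    StrictMonoOn
      (fun θ : ℝ => Real.log (∫ x in α..β, (x ^ θ + (1 - x) ^ θ) ^ (-(1 / θ))))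
      (Set.Iio 0) ∧
    StrictMonoOn
      (fun θ : ℝ => Real.log (∫ x in α..β, (x ^ θ + (1 - x) ^ θ) ^ (-(1 / θ))))
      (Set.Ioi 0) := by
  have hint : ∀ θ : ℝ, IntervalIntegrable
      (fun x : ℝ => (x ^ θ + (1 - x) ^ θ) ^ (-(1 / θ))) volume α β :=
    fun θ => (aux_cont hα hβ hαβ).intervalIntegrable
  have hmem : ∀ x ∈ Set.Ioo α β, 0 < x ∧ x < 1 := fun x hx =>
    ⟨hα.trans hx.1, hx.2.trans hβ⟩
  have hApos : ∀ θ : ℝ,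
      0 < ∫ x in α..β, (x ^ θ + (1 - x) ^ θ) ^ (-(1 / θ)) := by
    intro θ
    refine intervalIntegral.intervalIntegral_pos_of_pos_on (hint θ) (fun x hx => ?_) hαβ
    obtain ⟨h1, h2⟩ := hmem x hx
    have : 0 < x ^ θ + (1 - x) ^ θ := by
      have := Real.rpow_pos_of_pos h1 θ
      have := Real.rpow_pos_of_pos (by linarith : (0:ℝ) < 1 - x) θ
      linarith
    positivity
  have hmono : ∀ θ₁ θ₂ : ℝ, θ₁ < θ₂ → (0 < θ₁ ∨ θ₂ < 0) →
      (∫ x in α..β, (x ^ θ₁ + (1 - x) ^ θ₁) ^ (-(1 / θ₁))) <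
      (∫ x in α..β, (x ^ θ₂ + (1 - x) ^ θ₂) ^ (-(1 / θ₂))) := by
    intro θ₁ θ₂ h hsign
    have hsub : 0 < ∫ x in α..β,
        ((x ^ θ₂ + (1 - x) ^ θ₂) ^ (-(1 / θ₂)) - (x ^ θ₁ + (1 - x) ^ θ₁) ^ (-(1 / θ₁))) := by
      refine intervalIntegral.intervalIntegral_pos_of_pos_on
        ((hint θ₂).sub (hint θ₁)) (fun x hx => ?_) hαβ
      obtain ⟨h1, h2⟩ := hmem x hx
      exact sub_pos.mpr (aux_integrand_lt h1 h2 h hsign)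
    rw [intervalIntegral.integral_sub (hint θ₂) (hint θ₁)] at hsub
    linarith
  constructor
  · intro θ₁ h1 θ₂ h2 h
    exact Real.log_lt_log (hApos θ₁) (hmono θ₁ θ₂ h (Or.inr h2))
  · intro θ₁ h1 θ₂ h2 h
    exact Real.log_lt_log (hApos θ₁) (hmono θ₁ θ₂ h (Or.inl h1))
end

section
/- As θ → ±∞, P̃(θ)/θ → Ẽ_∓, where P̃(θ) = (β-α)^{-1} ∫_α^β log(1/(x^θ + (1-x)^θ)) dx, Ẽ_- = (β-α)^{-1} ∫_α^β log(1/max{x,1-x}) dx, and Ẽ_+ = (β-α)^{-1} ∫_α^β log(1/min{x,1-x}) dx. -/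
open MeasureTheory Filter

private lemma sum_rpow_pos' {x : ℝ} (hx0 : 0 < x) (hx1 : x < 1) (θ : ℝ) :
    0 < x ^ θ + (1 - x) ^ θ :=
  add_pos (Real.rpow_pos_of_pos hx0 θ) (Real.rpow_pos_of_pos (by linarith) θ)

private lemma ptwise_pos {x : ℝ} (hx0 : 0 < x) (hx1 : x < 1) {θ : ℝ} (hθ : 0 ≤ θ) :
    θ * Real.log (1 / max x (1 - x)) - Real.log 2 ≤ Real.log (1 / (x ^ θ + (1 - x) ^ θ)) ∧
    Real.log (1 / (x ^ θ + (1 - x) ^ θ)) ≤ θ * Real.log (1 / max x (1 - x)) := by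
  have hm : 0 < max x (1 - x) := lt_max_iff.2 (Or.inl hx0)
  have hs : 0 < x ^ θ + (1 - x) ^ θ := sum_rpow_pos' hx0 hx1 θ
  have h1 : max x (1 - x) ^ θ ≤ x ^ θ + (1 - x) ^ θ := by
    rcases max_cases x (1 - x) with ⟨he, _⟩ | ⟨he, _⟩ <;> rw [he]
    · nlinarith [Real.rpow_nonneg (by linarith : (0:ℝ) ≤ 1 - x) θ]
    · nlinarith [Real.rpow_nonneg hx0.le θ]
  have h2 : x ^ θ + (1 - x) ^ θ ≤ 2 * max x (1 - x) ^ θ := by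
    have a1 := Real.rpow_le_rpow hx0.le (le_max_left x (1 - x)) hθ
    have a2 := Real.rpow_le_rpow (by linarith : (0:ℝ) ≤ 1 - x) (le_max_right x (1 - x)) hθ
    linarith
  simp only [one_div, Real.log_inv]
  constructor
  · have h3 : Real.log (x ^ θ + (1 - x) ^ θ) ≤ Real.log (2 * max x (1 - x) ^ θ) :=
      Real.log_le_log hs h2
    rw [Real.log_mul (by norm_num) (ne_of_gt (Real.rpow_pos_of_pos hm θ)),
      Real.log_rpow hm] at h3
    nlinarith
  · have h3 : Real.log (max x (1 - x) ^ θ) ≤ Real.log (x ^ θ + (1 - x) ^ θ) :=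
      Real.log_le_log (Real.rpow_pos_of_pos hm θ) h1
    rw [Real.log_rpow hm] at h3
    nlinarith

private lemma ptwise_neg {x : ℝ} (hx0 : 0 < x) (hx1 : x < 1) {θ : ℝ} (hθ : θ ≤ 0) :
    θ * Real.log (1 / min x (1 - x)) - Real.log 2 ≤ Real.log (1 / (x ^ θ + (1 - x) ^ θ)) ∧
    Real.log (1 / (x ^ θ + (1 - x) ^ θ)) ≤ θ * Real.log (1 / min x (1 - x)) := by
  have hn : 0 < min x (1 - x) := lt_min hx0 (by linarith)
  have hs : 0 < x ^ θ + (1 - x) ^ θ := sum_rpow_pos' hx0 hx1 θ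
  have h1 : min x (1 - x) ^ θ ≤ x ^ θ + (1 - x) ^ θ := by
    rcases min_cases x (1 - x) with ⟨he, _⟩ | ⟨he, _⟩ <;> rw [he]
    · nlinarith [Real.rpow_nonneg (by linarith : (0:ℝ) ≤ 1 - x) θ]
    · nlinarith [Real.rpow_nonneg hx0.le θ]
  have h2 : x ^ θ + (1 - x) ^ θ ≤ 2 * min x (1 - x) ^ θ := by
    have a1 := Real.rpow_le_rpow_of_nonpos hn (min_le_left x (1 - x)) hθ
    have a2 := Real.rpow_le_rpow_of_nonpos hn (min_le_right x (1 - x)) hθ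
    linarith
  simp only [one_div, Real.log_inv]
  constructor
  · have h3 : Real.log (x ^ θ + (1 - x) ^ θ) ≤ Real.log (2 * min x (1 - x) ^ θ) :=
      Real.log_le_log hs h2
    rw [Real.log_mul (by norm_num) (ne_of_gt (Real.rpow_pos_of_pos hn θ)),
      Real.log_rpow hn] at h3
    nlinarith
  · have h3 : Real.log (min x (1 - x) ^ θ) ≤ Real.log (x ^ θ + (1 - x) ^ θ) :=
      Real.log_le_log (Real.rpow_pos_of_pos hn θ) h1
    rw [Real.log_rpow hn] at h3
    nlinarith

private lemma intInt_P {α β : ℝ} (hα : 0 < α) (hαβ : α ≤ β) (hβ : β < 1) (θ : ℝ) :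
    IntervalIntegrable (fun x => Real.log (1 / (x ^ θ + (1 - x) ^ θ))) volume α β := by
  apply ContinuousOn.intervalIntegrable
  rw [Set.uIcc_of_le hαβ]
  have hmem : ∀ x ∈ Set.Icc α β, 0 < x ∧ x < 1 := fun x hx =>
    ⟨lt_of_lt_of_le hα hx.1, lt_of_le_of_lt hx.2 hβ⟩
  have h1 : ContinuousOn (fun x : ℝ => x ^ θ + (1 - x) ^ θ) (Set.Icc α β) := by
    apply ContinuousOn.add
    · exact continuousOn_id.rpow_const fun x hx => Or.inl (ne_of_gt (hmem x hx).1)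
    · exact (continuousOn_const.sub continuousOn_id).rpow_const fun x hx =>
        Or.inl (by have := (hmem x hx).2; intro h; simp at h; linarith)
  have hne : ∀ x ∈ Set.Icc α β, x ^ θ + (1 - x) ^ θ ≠ 0 := fun x hx =>
    ne_of_gt (sum_rpow_pos' (hmem x hx).1 (hmem x hx).2 θ)
  exact (continuousOn_const.div h1 hne).log fun x hx => one_div_ne_zero (hne x hx)

private lemma intInt_max {α β : ℝ} (hα : 0 < α) (hαβ : α ≤ β) (hβ : β < 1) :
    IntervalIntegrable (fun x => Real.log (1 / max x (1 - x))) volume α β := by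
  apply ContinuousOn.intervalIntegrable
  rw [Set.uIcc_of_le hαβ]
  have h1 : ContinuousOn (fun x : ℝ => max x (1 - x)) (Set.Icc α β) :=
    (continuous_id.max (continuous_const.sub continuous_id)).continuousOn
  have hne : ∀ x ∈ Set.Icc α β, max x (1 - x) ≠ 0 := fun x hx =>
    ne_of_gt (lt_max_iff.2 (Or.inl (lt_of_lt_of_le hα hx.1)))
  exact (continuousOn_const.div h1 hne).log fun x hx => one_div_ne_zero (hne x hx)

private lemma intInt_min {α β : ℝ} (hα : 0 < α) (hαβ : α ≤ β) (hβ : β < 1) :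
    IntervalIntegrable (fun x => Real.log (1 / min x (1 - x))) volume α β := by
  apply ContinuousOn.intervalIntegrable
  rw [Set.uIcc_of_le hαβ]
  have h1 : ContinuousOn (fun x : ℝ => min x (1 - x)) (Set.Icc α β) :=
    (continuous_id.min (continuous_const.sub continuous_id)).continuousOn
  have hne : ∀ x ∈ Set.Icc α β, min x (1 - x) ≠ 0 := fun x hx =>
    ne_of_gt (lt_min (lt_of_lt_of_le hα hx.1) (by have := lt_of_le_of_lt hx.2 hβ; linarith))
  exact (continuousOn_const.div h1 hne).log fun x hx => one_div_ne_zero (hne x hx)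

private lemma int_bounds_pos {α β : ℝ} (hα : 0 < α) (hαβ : α ≤ β) (hβ : β < 1) {θ : ℝ}
    (hθ : 0 ≤ θ) :
    θ * (∫ x in α..β, Real.log (1 / max x (1 - x))) - (β - α) * Real.log 2 ≤
      (∫ x in α..β, Real.log (1 / (x ^ θ + (1 - x) ^ θ))) ∧
    (∫ x in α..β, Real.log (1 / (x ^ θ + (1 - x) ^ θ))) ≤
      θ * ∫ x in α..β, Real.log (1 / max x (1 - x)) := by
  have hmem : ∀ x ∈ Set.Icc α β, 0 < x ∧ x < 1 := fun x hx =>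
    ⟨lt_of_lt_of_le hα hx.1, lt_of_le_of_lt hx.2 hβ⟩
  have hImax := intInt_max hα hαβ hβ
  have hIP := intInt_P hα hαβ hβ θ
  constructor
  · have := intervalIntegral.integral_mono_on hαβ
      ((hImax.const_mul θ).sub intervalIntegrable_const) hIP
      (fun x hx => (ptwise_pos (hmem x hx).1 (hmem x hx).2 hθ).1)
    rwa [intervalIntegral.integral_sub (hImax.const_mul θ) intervalIntegrable_const,
      intervalIntegral.integral_const_mul, intervalIntegral.integral_const,
      smul_eq_mul] at this
  · have := intervalIntegral.integral_mono_on hαβ hIP (hImax.const_mul θ)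
      (fun x hx => (ptwise_pos (hmem x hx).1 (hmem x hx).2 hθ).2)
    rwa [intervalIntegral.integral_const_mul] at this

private lemma int_bounds_neg {α β : ℝ} (hα : 0 < α) (hαβ : α ≤ β) (hβ : β < 1) {θ : ℝ}
    (hθ : θ ≤ 0) :
    θ * (∫ x in α..β, Real.log (1 / min x (1 - x))) - (β - α) * Real.log 2 ≤
      (∫ x in α..β, Real.log (1 / (x ^ θ + (1 - x) ^ θ))) ∧
    (∫ x in α..β, Real.log (1 / (x ^ θ + (1 - x) ^ θ))) ≤
      θ * ∫ x in α..β, Real.log (1 / min x (1 - x)) := by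
  have hmem : ∀ x ∈ Set.Icc α β, 0 < x ∧ x < 1 := fun x hx =>
    ⟨lt_of_lt_of_le hα hx.1, lt_of_le_of_lt hx.2 hβ⟩
  have hImin := intInt_min hα hαβ hβ
  have hIP := intInt_P hα hαβ hβ θ
  constructor
  · have := intervalIntegral.integral_mono_on hαβ
      ((hImin.const_mul θ).sub intervalIntegrable_const) hIP
      (fun x hx => (ptwise_neg (hmem x hx).1 (hmem x hx).2 hθ).1)
    rwa [intervalIntegral.integral_sub (hImin.const_mul θ) intervalIntegrable_const,
      intervalIntegral.integral_const_mul, intervalIntegral.integral_const,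
      smul_eq_mul] at this
  · have := intervalIntegral.integral_mono_on hαβ hIP (hImin.const_mul θ)
      (fun x hx => (ptwise_neg (hmem x hx).1 (hmem x hx).2 hθ).2)
    rwa [intervalIntegral.integral_const_mul] at this

/-- For `0 < α ≤ β < 1`, with
`P̃(θ) = (β-α)⁻¹ ∫_α^β log(1/(x^θ + (1-x)^θ)) dx`,
`P̃(θ)/θ → Ẽ₋ = (β-α)⁻¹ ∫_α^β log(1/max(x,1-x)) dx` as `θ → +∞` and
`P̃(θ)/θ → Ẽ₊ = (β-α)⁻¹ ∫_α^β log(1/min(x,1-x)) dx` as `θ → -∞`. -/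
theorem stmt10 (α β : ℝ) (hα : 0 < α) (hαβ : α ≤ β) (hβ : β < 1) :
    Tendsto
      (fun θ : ℝ =>
        ((β - α)⁻¹ * ∫ x in α..β, Real.log (1 / (x ^ θ + (1 - x) ^ θ))) / θ)
      atTop
      (nhds ((β - α)⁻¹ * ∫ x in α..β, Real.log (1 / max x (1 - x)))) ∧
    Tendsto
      (fun θ : ℝ =>
        ((β - α)⁻¹ * ∫ x in α..β, Real.log (1 / (x ^ θ + (1 - x) ^ θ))) / θ)
      atBot
      (nhds ((β - α)⁻¹ * ∫ x in α..β, Real.log (1 / min x (1 - x)))) := by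
  rcases eq_or_lt_of_le hαβ with rfl | hlt
  · simp only [intervalIntegral.integral_same, mul_zero, zero_div]
    exact ⟨tendsto_const_nhds, tendsto_const_nhds⟩
  have hd : (0:ℝ) < β - α := by linarith
  have hc : (0:ℝ) < (β - α)⁻¹ := inv_pos.2 hd
  set c : ℝ := (β - α)⁻¹ with hcdef
  set Jmax : ℝ := ∫ x in α..β, Real.log (1 / max x (1 - x)) with hJmax
  set Jmin : ℝ := ∫ x in α..β, Real.log (1 / min x (1 - x)) with hJmin
  have hcd : c * (β - α) = 1 := inv_mul_cancel₀ (ne_of_gt hd)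
  constructor
  · apply tendsto_of_tendsto_of_tendsto_of_le_of_le'
      (g := fun θ : ℝ => c * Jmax - Real.log 2 / θ) (h := fun _ : ℝ => c * Jmax)
    · have h0 : Tendsto (fun θ : ℝ => Real.log 2 / θ) atTop (nhds 0) :=
        tendsto_const_nhds.div_atTop tendsto_id
      have := tendsto_const_nhds (x := c * Jmax) (f := atTop (α := ℝ)) |>.sub h0
      simpa using this
    · exact tendsto_const_nhds
    · filter_upwards [eventually_gt_atTop (0:ℝ)] with θ hθ
      have hb := (int_bounds_pos hα hαβ hβ hθ.le).1
      rw [le_div_iff₀ hθ]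
      calc (c * Jmax - Real.log 2 / θ) * θ
          = c * (θ * Jmax) - Real.log 2 / θ * θ := by ring
        _ = c * (θ * Jmax) - Real.log 2 := by rw [div_mul_cancel₀ _ (ne_of_gt hθ)]
        _ = c * (θ * Jmax - (β - α) * Real.log 2) + (c * (β - α) - 1) * Real.log 2 := by ring
        _ = c * (θ * Jmax - (β - α) * Real.log 2) := by rw [hcd]; ring
        _ ≤ _ := mul_le_mul_of_nonneg_left hb hc.le
    · filter_upwards [eventually_gt_atTop (0:ℝ)] with θ hθ
      have hb := (int_bounds_pos hα hαβ hβ hθ.le).2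
      rw [div_le_iff₀ hθ]
      calc c * ∫ x in α..β, Real.log (1 / (x ^ θ + (1 - x) ^ θ))
          ≤ c * (θ * Jmax) := mul_le_mul_of_nonneg_left hb hc.le
        _ = c * Jmax * θ := by ring
  · apply tendsto_of_tendsto_of_tendsto_of_le_of_le'
      (g := fun _ : ℝ => c * Jmin) (h := fun θ : ℝ => c * Jmin - Real.log 2 / θ)
    · exact tendsto_const_nhds
    · have h0 : Tendsto (fun θ : ℝ => Real.log 2 / θ) atBot (nhds 0) := by
        have h1 : Tendsto (fun θ : ℝ => Real.log 2 / (-θ)) atBot (nhds 0) :=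
          tendsto_const_nhds.div_atTop tendsto_neg_atBot_atTop
        have := h1.neg
        simp only [neg_zero] at this
        refine this.congr fun θ => by rw [div_neg, neg_neg]
      have := tendsto_const_nhds (x := c * Jmin) (f := atBot (α := ℝ)) |>.sub h0
      simpa using this
    · filter_upwards [eventually_lt_atBot (0:ℝ)] with θ hθ
      have hb := (int_bounds_neg hα hαβ hβ hθ.le).2
      rw [le_div_iff_of_neg hθ]
      calc c * ∫ x in α..β, Real.log (1 / (x ^ θ + (1 - x) ^ θ))
          ≤ c * (θ * Jmin) := mul_le_mul_of_nonneg_left hb hc.le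
        _ = c * Jmin * θ := by ring
    · filter_upwards [eventually_lt_atBot (0:ℝ)] with θ hθ
      have hb := (int_bounds_neg hα hαβ hβ hθ.le).1
      rw [div_le_iff_of_neg hθ]
      calc (c * Jmin - Real.log 2 / θ) * θ
          = c * (θ * Jmin) - Real.log 2 / θ * θ := by ring
        _ = c * (θ * Jmin) - Real.log 2 := by rw [div_mul_cancel₀ _ (ne_of_lt hθ)]
        _ = c * (θ * Jmin - (β - α) * Real.log 2) + (c * (β - α) - 1) * Real.log 2 := by ring
        _ = c * (θ * Jmin - (β - α) * Real.log 2) := by rw [hcd]; ring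
        _ ≤ _ := mul_le_mul_of_nonneg_left hb hc.le
end

section
/- For the matrix-product stationary measure of the boundary driven SSEP, the weight is monotone under moving a particle to the right: if η(x) = 1 and η(x+1) = 0, then ω_N(σ^{x,x+1}η) - ω_N(η) = -ω_{N-1}(ξ) - ω_{N-1}(ζ) ≤ 0, where ξ, ζ are obtained from η by replacing the pair (η(x), η(x+1)) by a single site with value 1, respectively 0. Consequently, among configurations with prescribed particle numbers in each of finitely many intervals, the stationary probability is maximized by the configuration with all particles at the left-most positions in each interval and minimized by the right-most configuration. -/
/-!
Writing `P`, `Q` for the products over the sites left and right of the pair, the relation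
`ED - DE = -(D + E)` gives `ω(…01…) - ω(…10…) = w(P (ED - DE) Q v) = -ω(…1…) - ω(…0…)`, which is
nonpositive because weights are. Hence moving a particle one step to the left never decreases the
weight, and a sequence of such moves packs the particles of every interval to its left end;
reversing the moves packs them to the right end. Packing within intervals preserves the length
of the configuration, so the normalisation `w((D + E)ⁿ v)` is the same on both sides, and it is
nonnegative since it is the sum of the weights of all configurations of length `n`.
-/

open List

section MatrixProduct

def configProd {R : Type*} [Monoid R] (D E : R) (l : List Bool) : R :=
  (l.map fun b => if b then D else E).prod

variable {R : Type*} {D E : R}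

@[simp]
theorem configProd_nil [Monoid R] : configProd D E [] = 1 := rfl

@[simp]
theorem configProd_cons [Monoid R] (b : Bool) (l : List Bool) :
    configProd D E (b :: l) = (if b then D else E) * configProd D E l := prod_cons

@[simp]
theorem configProd_append [Monoid R] (l₁ l₂ : List Bool) :
    configProd D E (l₁ ++ l₂) = configProd D E l₁ * configProd D E l₂ := by
  simp only [configProd, map_append, prod_append]

theorem configProd_swap_sub [Ring R] (h : D * E - E * D = D + E) (l₁ l₂ : List Bool) :
    configProd D E (l₁ ++ [false, true] ++ l₂) - configProd D E (l₁ ++ [true, false] ++ l₂) =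
      -configProd D E (l₁ ++ [true] ++ l₂) - configProd D E (l₁ ++ [false] ++ l₂) := by
  have hED : E * D - D * E = -(D + E) := by rw [← h]; abel
  simp only [configProd_append, configProd_cons, configProd_nil, Bool.false_eq_true,
    ↓reduceIte, mul_one]
  calc _ = configProd D E l₁ * (E * D - D * E) * configProd D E l₂ := by noncomm_ring
    _ = _ := by rw [hED]; noncomm_ring

end MatrixProduct

theorem apply_configProd_mul_pow_nonneg {M : Type*} [AddCommGroup M] [Module ℝ M]
    {D E : Module.End ℝ M} {v : M} {w : M →ₗ[ℝ] ℝ}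
    (hpos : ∀ l : List Bool, 0 ≤ w (configProd D E l v)) (n : ℕ) (l : List Bool) :
    0 ≤ w ((configProd D E l * (D + E) ^ n) v) := by
  induction n generalizing l with
  | zero => simpa using hpos l
  | succ n ih =>
    have hsplit : configProd D E l * (D + E) ^ (n + 1) =
        configProd D E (l ++ [true]) * (D + E) ^ n +
          configProd D E (l ++ [false]) * (D + E) ^ n := by
      simp only [configProd_append, pow_succ', configProd_cons, configProd_nil,
        Bool.false_eq_true, ↓reduceIte, mul_one]
      noncomm_ring
    rw [hsplit, LinearMap.add_apply, map_add]
    exact add_nonneg (ih _) (ih _)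

def packLeft (l : List Bool) : List Bool :=
  replicate (l.count true) true ++ replicate (l.count false) false

def packRight (l : List Bool) : List Bool :=
  replicate (l.count false) false ++ replicate (l.count true) true

theorem length_packLeft (l : List Bool) : (packLeft l).length = l.length := by
  simp [packLeft, count_true_add_count_false]

theorem length_packRight (l : List Bool) : (packRight l).length = l.length := by
  simp [packRight, count_false_add_count_true]

theorem length_flatten_map_packLeft (L : List (List Bool)) :
    (L.map packLeft).flatten.length = L.flatten.length := by
  simp [length_flatten, Function.comp_def, length_packLeft]

theorem length_flatten_map_packRight (L : List (List Bool)) :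
    (L.map packRight).flatten.length = L.flatten.length := by
  simp [length_flatten, Function.comp_def, length_packRight]

theorem count_false_eq_sub {b : List Bool} {n k : ℕ} (hlen : b.length = n)
    (hcount : b.count true = k) : b.count false = n - k := by
  have := count_false_add_count_true b
  omega

section Blocks

variable {config : List (List Bool)} {blocks : List (ℕ × ℕ)}

theorem map_packLeft_of_forall₂
    (h : Forall₂ (fun b p => b.length = p.1 ∧ b.count true = p.2) config blocks) :
    config.map packLeft =
      blocks.map fun p => replicate p.2 true ++ replicate (p.1 - p.2) false := by
  induction h with
  | nil => rfl
  | cons hbp _ ih =>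
    rw [map_cons, map_cons, ih, packLeft, count_false_eq_sub hbp.1 hbp.2, hbp.2]

theorem map_packRight_of_forall₂
    (h : Forall₂ (fun b p => b.length = p.1 ∧ b.count true = p.2) config blocks) :
    config.map packRight =
      blocks.map fun p => replicate (p.1 - p.2) false ++ replicate p.2 true := by
  induction h with
  | nil => rfl
  | cons hbp _ ih =>
    rw [map_cons, map_cons, ih, packRight, count_false_eq_sub hbp.1 hbp.2, hbp.2]

end Blocks

/-- `ω` does not decrease when a particle (`true`) jumps left over a hole (`false`). -/
def SwapMonotone {α : Type*} [Preorder α] (ω : List Bool → α) : Prop :=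
  ∀ l₁ l₂ : List Bool, ω (l₁ ++ [false, true] ++ l₂) ≤ ω (l₁ ++ [true, false] ++ l₂)

namespace SwapMonotone

variable {α : Type*} [Preorder α] {ω : List Bool → α}

theorem hole_past_particles (h : SwapMonotone ω) (k : ℕ) (l₁ l₂ : List Bool) :
    ω (l₁ ++ false :: replicate k true ++ l₂) ≤ ω (l₁ ++ replicate k true ++ false :: l₂) := by
  induction k generalizing l₁ with
  | zero => simp
  | succ k ih =>
    calc ω (l₁ ++ false :: replicate (k + 1) true ++ l₂)
        = ω (l₁ ++ [false, true] ++ (replicate k true ++ l₂)) := by simp [replicate_succ]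
      _ ≤ ω (l₁ ++ [true, false] ++ (replicate k true ++ l₂)) := h _ _
      _ = ω ((l₁ ++ [true]) ++ false :: replicate k true ++ l₂) := by simp
      _ ≤ ω ((l₁ ++ [true]) ++ replicate k true ++ false :: l₂) := ih _
      _ = ω (l₁ ++ replicate (k + 1) true ++ false :: l₂) := by simp [replicate_succ]

theorem particle_past_holes (h : SwapMonotone ω) (k : ℕ) (l₁ l₂ : List Bool) :
    ω (l₁ ++ replicate k false ++ true :: l₂) ≤ ω (l₁ ++ true :: replicate k false ++ l₂) := by
  induction k generalizing l₁ with
  | zero => simp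
  | succ k ih =>
    calc ω (l₁ ++ replicate (k + 1) false ++ true :: l₂)
        = ω ((l₁ ++ [false]) ++ replicate k false ++ true :: l₂) := by simp [replicate_succ]
      _ ≤ ω ((l₁ ++ [false]) ++ true :: replicate k false ++ l₂) := ih _
      _ = ω (l₁ ++ [false, true] ++ (replicate k false ++ l₂)) := by simp
      _ ≤ ω (l₁ ++ [true, false] ++ (replicate k false ++ l₂)) := h _ _
      _ = ω (l₁ ++ true :: replicate (k + 1) false ++ l₂) := by simp [replicate_succ]

theorem le_packLeft (h : SwapMonotone ω) (l l₁ l₂ : List Bool) :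
    ω (l₁ ++ l ++ l₂) ≤ ω (l₁ ++ packLeft l ++ l₂) := by
  induction l generalizing l₁ with
  | nil => simp [packLeft]
  | cons b t ih =>
    calc ω (l₁ ++ b :: t ++ l₂) = ω ((l₁ ++ [b]) ++ t ++ l₂) := by simp
      _ ≤ ω ((l₁ ++ [b]) ++ packLeft t ++ l₂) := ih _
      _ ≤ ω (l₁ ++ packLeft (b :: t) ++ l₂) := by
        cases b
        · simpa [packLeft, replicate_succ] using
            h.hole_past_particles (t.count true) l₁ (replicate (t.count false) false ++ l₂)
        · simp [packLeft, replicate_succ]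

theorem packRight_le (h : SwapMonotone ω) (l l₁ l₂ : List Bool) :
    ω (l₁ ++ packRight l ++ l₂) ≤ ω (l₁ ++ l ++ l₂) := by
  induction l generalizing l₁ with
  | nil => simp [packRight]
  | cons b t ih =>
    calc ω (l₁ ++ packRight (b :: t) ++ l₂) ≤ ω ((l₁ ++ [b]) ++ packRight t ++ l₂) := by
          cases b
          · simp [packRight, replicate_succ]
          · simpa [packRight, replicate_succ] using
              h.particle_past_holes (t.count false) l₁ (replicate (t.count true) true ++ l₂)
      _ ≤ ω ((l₁ ++ [b]) ++ t ++ l₂) := ih _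
      _ = ω (l₁ ++ b :: t ++ l₂) := by simp

theorem le_flatten_map_packLeft (h : SwapMonotone ω) (L : List (List Bool)) (l₁ : List Bool) :
    ω (l₁ ++ L.flatten) ≤ ω (l₁ ++ (L.map packLeft).flatten) := by
  induction L generalizing l₁ with
  | nil => simp
  | cons b L ih =>
    calc ω (l₁ ++ (b :: L).flatten) = ω (l₁ ++ b ++ L.flatten) := by simp
      _ ≤ ω (l₁ ++ packLeft b ++ L.flatten) := h.le_packLeft _ _ _
      _ ≤ ω (l₁ ++ packLeft b ++ (L.map packLeft).flatten) := ih _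
      _ = ω (l₁ ++ ((b :: L).map packLeft).flatten) := by simp

theorem flatten_map_packRight_le (h : SwapMonotone ω) (L : List (List Bool)) (l₁ : List Bool) :
    ω (l₁ ++ (L.map packRight).flatten) ≤ ω (l₁ ++ L.flatten) := by
  induction L generalizing l₁ with
  | nil => simp
  | cons b L ih =>
    calc ω (l₁ ++ ((b :: L).map packRight).flatten)
        = ω (l₁ ++ packRight b ++ (L.map packRight).flatten) := by simp
      _ ≤ ω (l₁ ++ packRight b ++ L.flatten) := ih _
      _ ≤ ω (l₁ ++ b ++ L.flatten) := h.packRight_le _ _ _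
      _ = ω (l₁ ++ (b :: L).flatten) := by simp

end SwapMonotone

theorem stmt19_general {M : Type*} [AddCommGroup M] [Module ℝ M]
    (D E : Module.End ℝ M) (v : M) (w : M →ₗ[ℝ] ℝ)
    (halg : D * E - E * D = D + E)
    (ω : List Bool → ℝ)
    (hω : ∀ l : List Bool, ω l = w ((l.map fun b => if b then D else E).prod v))
    (hpos : ∀ l : List Bool, 0 ≤ ω l) :
    let μ : List Bool → ℝ := fun l => ω l / w (((D + E) ^ l.length : Module.End ℝ M) v)
    (∀ l₁ l₂ : List Bool,
      ω (l₁ ++ [false, true] ++ l₂) - ω (l₁ ++ [true, false] ++ l₂)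
          = -ω (l₁ ++ [true] ++ l₂) - ω (l₁ ++ [false] ++ l₂) ∧
      ω (l₁ ++ [false, true] ++ l₂) ≤ ω (l₁ ++ [true, false] ++ l₂)) ∧
    (∀ blocks : List (ℕ × ℕ), (∀ p ∈ blocks, p.2 ≤ p.1) →
      ∀ config : List (List Bool),
        List.Forall₂
          (fun (b : List Bool) (p : ℕ × ℕ) => b.length = p.1 ∧ b.count true = p.2)
          config blocks →
        μ ((blocks.map fun p =>
              List.replicate (p.1 - p.2) false ++ List.replicate p.2 true).flatten)
          ≤ μ (config.flatten) ∧
        μ (config.flatten)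
          ≤ μ ((blocks.map fun p =>
              List.replicate p.2 true ++ List.replicate (p.1 - p.2) false).flatten)) := by
  intro μ
  have hswap (l₁ l₂ : List Bool) :
      ω (l₁ ++ [false, true] ++ l₂) - ω (l₁ ++ [true, false] ++ l₂) =
        -ω (l₁ ++ [true] ++ l₂) - ω (l₁ ++ [false] ++ l₂) := by
    simpa only [hω, configProd, LinearMap.sub_apply, LinearMap.neg_apply, map_sub, map_neg] using
      congrArg (fun A : Module.End ℝ M => w (A v)) (configProd_swap_sub halg l₁ l₂)
  have hmono : SwapMonotone ω := fun l₁ l₂ => by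
    linarith [hswap l₁ l₂, hpos (l₁ ++ [true] ++ l₂), hpos (l₁ ++ [false] ++ l₂)]
  have hZ (n : ℕ) : 0 ≤ w (((D + E) ^ n : Module.End ℝ M) v) := by
    simpa [configProd] using
      apply_configProd_mul_pow_nonneg (fun l => hω l ▸ hpos l) n []
  have hμ {l l' : List Bool} (hlen : l.length = l'.length) (hle : ω l ≤ ω l') :
      μ l ≤ μ l' := by
    simp only [μ, hlen]
    exact div_le_div_of_nonneg_right hle (hZ _)
  refine ⟨fun l₁ l₂ => ⟨hswap l₁ l₂, hmono l₁ l₂⟩, fun blocks _ config hF => ?_⟩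
  rw [← map_packRight_of_forall₂ hF, ← map_packLeft_of_forall₂ hF]
  exact ⟨hμ (length_flatten_map_packRight config)
      (by simpa using hmono.flatten_map_packRight_le config []),
    hμ (length_flatten_map_packLeft config).symm
      (by simpa using hmono.le_flatten_map_packLeft config [])⟩

/-- Matrix-product (DEHP) representation of the stationary measure of the
boundary driven SSEP. Let `D, E` be operators on a real vector space, `v` a
vector and `w` a linear functional satisfying the algebra
`DE - ED = D + E`, `((1-β)D - βE)v = v`, `w ∘ (αE - (1-α)D) = w`, and let
`ω(l) = w(∏ₓ (η(x)D + (1-η(x))E) v)` be the (nonnegative) weight of a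
configuration `l`, and `μ(l) = ω(l)/w((D+E)^{|l|} v)` the stationary
probability.  Then the weight is monotone under moving a particle to the
right: if a configuration has a particle at `x` and a hole at `x+1`,
`ω(swapped) - ω = -ω(ξ) - ω(ζ) ≤ 0`, where `ξ, ζ` are obtained by merging
the pair into a single occupied, resp. empty, site.  Consequently, among
configurations with prescribed particle numbers in each of finitely many
intervals, the stationary probability is maximal for the configuration with
all particles at the left-most positions of each interval and minimal for
the right-most one. -/
theorem stmt19 {M : Type*} [AddCommGroup M] [Module ℝ M]
    (α β : ℝ) (hα : 0 < α) (hαβ : α ≤ β) (hβ : β < 1)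
    (D E : Module.End ℝ M) (v : M) (w : M →ₗ[ℝ] ℝ)
    (halg : D * E - E * D = D + E)
    (hV : ((1 - β) • D - β • E) v = v)
    (hW : ∀ u : M, w (((α • E - (1 - α) • D : Module.End ℝ M)) u) = w u)
    (ω : List Bool → ℝ)
    (hω : ∀ l : List Bool, ω l = w ((l.map fun b => if b then D else E).prod v))
    (hpos : ∀ l : List Bool, 0 ≤ ω l)
    (hZ : ∀ n : ℕ, 0 < w (((D + E) ^ n : Module.End ℝ M) v)) :
    let μ : List Bool → ℝ := fun l => ω l / w (((D + E) ^ l.length : Module.End ℝ M) v)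
    (∀ l₁ l₂ : List Bool,
      ω (l₁ ++ [false, true] ++ l₂) - ω (l₁ ++ [true, false] ++ l₂)
          = -ω (l₁ ++ [true] ++ l₂) - ω (l₁ ++ [false] ++ l₂) ∧
      ω (l₁ ++ [false, true] ++ l₂) ≤ ω (l₁ ++ [true, false] ++ l₂)) ∧
    (∀ blocks : List (ℕ × ℕ), (∀ p ∈ blocks, p.2 ≤ p.1) →
      ∀ config : List (List Bool),
        List.Forall₂
          (fun (b : List Bool) (p : ℕ × ℕ) => b.length = p.1 ∧ b.count true = p.2)
          config blocks →
        μ ((blocks.map fun p =>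
              List.replicate (p.1 - p.2) false ++ List.replicate p.2 true).flatten)
          ≤ μ (config.flatten) ∧
        μ (config.flatten)
          ≤ μ ((blocks.map fun p =>
              List.replicate p.2 true ++ List.replicate (p.1 - p.2) false).flatten)) :=
  stmt19_general D E v w halg ω hω hpos
end
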